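/- Let $a_1, a_2, \beta, a^* > 0$ with $\beta^* := a^* + \sqrt{(a^*-a_1)(a^*-a_2)}$ and $0 < a_1, a_2 \le a^*$. For nonnegative reals $K_1, K_2, d_{11}, d_{22}, d_{12}$ satisfying $d_{12} \le \sqrt{d_{11}d_{22}}$ (Cauchy-Schwarz for Coulomb energy), $d_{11}+d_{22}+2d_{12} \le \frac{2}{a^*}(K_1+K_2)$ (Gagliardo-Nirenberg with unit mass), and $\beta \le \beta^*$, the quantity $E := K_1 + K_2 - \frac{a_1}{2}d_{11} - \frac{a_2}{2}d_{22} - \beta d_{12}$ satisfies $E \ge 0$. That is, the algebraic decomposition $E = (K_1+K_2) - \frac{a^*}{2}(d_{11}+d_{22}+2d_{12}) + \frac{1}{2}(\sqrt{(a^*-a_1)d_{11}} - \sqrt{(a^*-a_2)d_{22}})^2 + \sqrt{(a^*-a_1)(a^*-a_2)}(\sqrt{d_{11}d_{22}} - d_{12}) + (\beta^*-\beta)d_{12}$ holds and each term is nonnegative. -/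
import Mathlib


/-- Algebraic core of the energy lower bound: with `β* = a* + √((a*-a₁)(a*-a₂))`,
`0 < a₁, a₂ ≤ a*`, `β ≤ β*`, and nonnegative `K₁, K₂, d₁₁, d₂₂, d₁₂` with
`d₁₂ ≤ √(d₁₁ d₂₂)` and `d₁₁ + d₂₂ + 2 d₁₂ ≤ (2/a*)(K₁+K₂)`, the energy
`E = K₁ + K₂ - (a₁/2) d₁₁ - (a₂/2) d₂₂ - β d₁₂` admits the stated
decomposition with each term nonnegative, and hence `E ≥ 0`. -/
theorem stmt18 (astar a1 a2 β K1 K2 d11 d22 d12 : ℝ)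
    (hastar : 0 < astar) (ha1 : 0 < a1) (ha2 : 0 < a2) (hβ : 0 < β)
    (ha1' : a1 ≤ astar) (ha2' : a2 ≤ astar)
    (hβ' : β ≤ astar + Real.sqrt ((astar - a1) * (astar - a2)))
    (hK1 : 0 ≤ K1) (hK2 : 0 ≤ K2) (hd11 : 0 ≤ d11) (hd22 : 0 ≤ d22)
    (hd12 : 0 ≤ d12)
    (hCS : d12 ≤ Real.sqrt (d11 * d22))
    (hGN : d11 + d22 + 2 * d12 ≤ 2 / astar * (K1 + K2)) :
    K1 + K2 - a1 / 2 * d11 - a2 / 2 * d22 - β * d12 =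
        (K1 + K2) - astar / 2 * (d11 + d22 + 2 * d12) +
        (1 / 2) * (Real.sqrt ((astar - a1) * d11) -
          Real.sqrt ((astar - a2) * d22)) ^ 2 +
        Real.sqrt ((astar - a1) * (astar - a2)) * (Real.sqrt (d11 * d22) - d12) +
        (astar + Real.sqrt ((astar - a1) * (astar - a2)) - β) * d12 ∧
    0 ≤ (K1 + K2) - astar / 2 * (d11 + d22 + 2 * d12) ∧
    0 ≤ (1 / 2) * (Real.sqrt ((astar - a1) * d11) -
          Real.sqrt ((astar - a2) * d22)) ^ 2 ∧
    0 ≤ Real.sqrt ((astar - a1) * (astar - a2)) * (Real.sqrt (d11 * d22) - d12) ∧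
    0 ≤ (astar + Real.sqrt ((astar - a1) * (astar - a2)) - β) * d12 ∧
    0 ≤ K1 + K2 - a1 / 2 * d11 - a2 / 2 * d22 - β * d12 := by

  have hb1 : (0:ℝ) ≤ astar - a1 := by linarith
  have hb2 : (0:ℝ) ≤ astar - a2 := by linarith
  have h1 : Real.sqrt ((astar - a1) * d11) ^ 2 = (astar - a1) * d11 :=
    Real.sq_sqrt (mul_nonneg hb1 hd11)
  have h2 : Real.sqrt ((astar - a2) * d22) ^ 2 = (astar - a2) * d22 :=
    Real.sq_sqrt (mul_nonneg hb2 hd22)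
  have h3 : Real.sqrt ((astar - a1) * d11) * Real.sqrt ((astar - a2) * d22) =
      Real.sqrt ((astar - a1) * (astar - a2)) * Real.sqrt (d11 * d22) := by
    rw [Real.sqrt_mul hb1, Real.sqrt_mul hb1, Real.sqrt_mul hb2, Real.sqrt_mul hd11]
    ring
  have heq : K1 + K2 - a1 / 2 * d11 - a2 / 2 * d22 - β * d12 =
        (K1 + K2) - astar / 2 * (d11 + d22 + 2 * d12) +
        (1 / 2) * (Real.sqrt ((astar - a1) * d11) -
          Real.sqrt ((astar - a2) * d22)) ^ 2 +
        Real.sqrt ((astar - a1) * (astar - a2)) * (Real.sqrt (d11 * d22) - d12) +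
        (astar + Real.sqrt ((astar - a1) * (astar - a2)) - β) * d12 := by
    linear_combination (-1/2) * h1 + (-1/2) * h2 + h3
  have hS : 0 ≤ Real.sqrt ((astar - a1) * (astar - a2)) := Real.sqrt_nonneg _
  have t1 : 0 ≤ (K1 + K2) - astar / 2 * (d11 + d22 + 2 * d12) := by
    rw [div_mul_eq_mul_div, le_div_iff₀ hastar] at hGN
    nlinarith
  have t2 : 0 ≤ (1 / 2) * (Real.sqrt ((astar - a1) * d11) -
          Real.sqrt ((astar - a2) * d22)) ^ 2 := by positivity
  have t3 : 0 ≤ Real.sqrt ((astar - a1) * (astar - a2)) *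
      (Real.sqrt (d11 * d22) - d12) := mul_nonneg hS (by linarith)
  have t4 : 0 ≤ (astar + Real.sqrt ((astar - a1) * (astar - a2)) - β) * d12 :=
    mul_nonneg (by linarith) hd12
  exact ⟨heq, t1, t2, t3, t4, by rw [heq]; linarith⟩
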